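/- arXiv:1709.00710 — 4 statements merged into one kernel-verified Lean document; each statement's English description precedes it below -/
import Mathlib

section
/- (Deterministic core of the l₂ error bound for the Dantzig selector.) Let V be a symmetric positive semidefinite p×p matrix, θ⁰ ∈ ℝ^p with support T (so θ⁰_j = 0 for j ∉ T), and θ̂ ∈ ℝ^p with ‖θ̂‖₁ ≤ ‖θ⁰‖₁. Set h = θ̂ - θ⁰ and suppose h^T V h ≤ 2γ‖h‖₁ for some γ > 0. Then h ∈ C_T (i.e. ‖h_{T^c}‖₁ ≤ ‖h_T‖₁), and h^T V h ≤ 4‖θ⁰‖₁·γ. Consequently, if RE(T,V) > 0 then ‖θ̂ - θ⁰‖₂² ≤ 4‖θ⁰‖₁·γ / RE(T,V)². -/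
/-!
Since `θ⁰` vanishes off `T`, the triangle inequality on `T` turns `‖θ̂‖₁ ≤ ‖θ⁰‖₁` into
`‖h_{Tᶜ}‖₁ ≤ ‖h_T‖₁`, and into `‖h‖₁ ≤ 2‖θ⁰‖₁`, which bounds `hᵀVh ≤ 2γ‖h‖₁` by `4‖θ⁰‖₁γ`.
As `h` lies in the cone `C_T`, the definition of `RE(T,V)` as an infimum over that cone gives
`RE(T,V)² ‖h‖₂² ≤ hᵀVh`.
-/

open Finset Matrix

variable {ι : Type*} [Fintype ι]

section Cone

variable {θ₀ θ : ι → ℝ}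

theorem sum_abs_sub_le_two_mul_of_sum_abs_le (hl1 : ∑ j, |θ j| ≤ ∑ j, |θ₀ j|) :
    ∑ j, |(θ - θ₀) j| ≤ 2 * ∑ j, |θ₀ j| := by
  have : ∑ j, |(θ - θ₀) j| ≤ ∑ j, |θ j| + ∑ j, |θ₀ j| := by
    rw [← sum_add_distrib]
    exact sum_le_sum fun j _ => abs_sub (θ j) (θ₀ j)
  linarith

variable [DecidableEq ι] {T : Finset ι}

theorem sum_abs_compl_le_sum_abs_of_sum_abs_le (hsupp : ∀ j ∉ T, θ₀ j = 0)
    (hl1 : ∑ j, |θ j| ≤ ∑ j, |θ₀ j|) :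
    ∑ j ∈ Tᶜ, |(θ - θ₀) j| ≤ ∑ j ∈ T, |(θ - θ₀) j| := by
  have hθ₀ : ∑ j, |θ₀ j| = ∑ j ∈ T, |θ₀ j| :=
    (sum_subset (subset_univ T) fun j _ hj => by rw [hsupp j hj, abs_zero]).symm
  have hθ : ∑ j, |θ j| = ∑ j ∈ T, |θ j| + ∑ j ∈ Tᶜ, |(θ - θ₀) j| := by
    rw [← sum_add_sum_compl T]
    congr 1
    exact sum_congr rfl fun j hj => by rw [Pi.sub_apply, hsupp j (mem_compl.mp hj), sub_zero]
  have hT : ∑ j ∈ T, |θ₀ j| - ∑ j ∈ T, |(θ - θ₀) j| ≤ ∑ j ∈ T, |θ j| := by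
    rw [← sum_sub_distrib]
    exact sum_le_sum fun j _ => by
      rw [Pi.sub_apply, abs_sub_comm]
      linarith [abs_sub_abs_le_abs_sub (θ₀ j) (θ j)]
  linarith

end Cone

section RestrictedEigenvalue

variable [DecidableEq ι]

/-- `RE(T,V)`; for `0 < RE(T,V)` the set is nonempty, so the real `sInf` is not its junk value. -/
noncomputable def restrictedEigenvalue (V : Matrix ι ι ℝ) (T : Finset ι) : ℝ :=
  sInf {x : ℝ | ∃ g : ι → ℝ, g ≠ 0 ∧
    (∑ j ∈ Tᶜ, |g j|) ≤ (∑ j ∈ T, |g j|) ∧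
    x = Real.sqrt (g ⬝ᵥ V.mulVec g) / Real.sqrt (∑ j, (g j) ^ 2)}

variable {V : Matrix ι ι ℝ} {T : Finset ι} {g : ι → ℝ}

theorem restrictedEigenvalue_le (hg0 : g ≠ 0) (hg : ∑ j ∈ Tᶜ, |g j| ≤ ∑ j ∈ T, |g j|) :
    restrictedEigenvalue V T ≤
      Real.sqrt (g ⬝ᵥ V.mulVec g) / Real.sqrt (∑ j, (g j) ^ 2) :=
  csInf_le ⟨0, by rintro x ⟨g, -, -, rfl⟩; positivity⟩ ⟨g, hg0, hg, rfl⟩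

theorem sq_restrictedEigenvalue_mul_sum_sq_le (hRE : 0 < restrictedEigenvalue V T)
    (hg : ∑ j ∈ Tᶜ, |g j| ≤ ∑ j ∈ T, |g j|) :
    restrictedEigenvalue V T ^ 2 * ∑ j, (g j) ^ 2 ≤ g ⬝ᵥ V.mulVec g := by
  rcases eq_or_ne g 0 with rfl | hg0
  · simp
  have hnorm : 0 < ∑ j, (g j) ^ 2 := by
    obtain ⟨j, hj⟩ := Function.ne_iff.mp hg0
    exact sum_pos' (fun i _ => sq_nonneg (g i)) ⟨j, mem_univ j, sq_pos_of_ne_zero hj⟩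
  have hle : restrictedEigenvalue V T * Real.sqrt (∑ j, (g j) ^ 2) ≤
      Real.sqrt (g ⬝ᵥ V.mulVec g) :=
    (le_div_iff₀ (Real.sqrt_pos.mpr hnorm)).mp (restrictedEigenvalue_le hg0 hg)
  have hsq := (Real.le_sqrt' (mul_pos hRE (Real.sqrt_pos.mpr hnorm))).mp hle
  rwa [mul_pow, Real.sq_sqrt hnorm.le] at hsq

end RestrictedEigenvalue

theorem stmt5_general (p : ℕ) (V : Matrix (Fin p) (Fin p) ℝ)
    (θ0 θh : Fin p → ℝ) (γ : ℝ) (hγ : 0 < γ)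
    (T : Finset (Fin p)) (hT : ∀ j, j ∈ T ↔ θ0 j ≠ 0)
    (h : Fin p → ℝ) (hdef : h = θh - θ0)
    (hl1 : (∑ j, |θh j|) ≤ (∑ j, |θ0 j|))
    (hQ : h ⬝ᵥ V.mulVec h ≤ 2 * γ * (∑ j, |h j|)) :
    (∑ j ∈ Tᶜ, |h j|) ≤ (∑ j ∈ T, |h j|) ∧
    h ⬝ᵥ V.mulVec h ≤ 4 * (∑ j, |θ0 j|) * γ ∧
    ∀ RE : ℝ,
      RE = sInf {x : ℝ | ∃ g : Fin p → ℝ, g ≠ 0 ∧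
          (∑ j ∈ Tᶜ, |g j|) ≤ (∑ j ∈ T, |g j|) ∧
          x = Real.sqrt (g ⬝ᵥ V.mulVec g) / Real.sqrt (∑ j, (g j) ^ 2)} →
      0 < RE →
      (∑ j, (θh j - θ0 j) ^ 2) ≤ 4 * (∑ j, |θ0 j|) * γ / RE ^ 2 := by
  subst hdef
  have hsupp : ∀ j ∉ T, θ0 j = 0 := fun j hj => not_not.mp (mt (hT j).mpr hj)
  have hcone := sum_abs_compl_le_sum_abs_of_sum_abs_le hsupp hl1
  have hquad : (θh - θ0) ⬝ᵥ V.mulVec (θh - θ0) ≤ 4 * (∑ j, |θ0 j|) * γ :=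
    calc (θh - θ0) ⬝ᵥ V.mulVec (θh - θ0) ≤ 2 * γ * ∑ j, |(θh - θ0) j| := hQ
      _ ≤ 2 * γ * (2 * ∑ j, |θ0 j|) := by
        gcongr
        exact sum_abs_sub_le_two_mul_of_sum_abs_le hl1
      _ = 4 * (∑ j, |θ0 j|) * γ := by ring
  refine ⟨hcone, hquad, ?_⟩
  rintro RE rfl hRE
  rw [le_div_iff₀ (by positivity), mul_comm]
  exact (sq_restrictedEigenvalue_mul_sum_sq_le hRE hcone).trans hquad

/-- Deterministic core of the l₂ error bound for the Dantzig selector: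
if `‖θ̂‖₁ ≤ ‖θ⁰‖₁` and `hᵀVh ≤ 2γ‖h‖₁` for `h = θ̂ - θ⁰`, with `T` the support of `θ⁰`,
then `h` belongs to the cone `C_T`, `hᵀVh ≤ 4‖θ⁰‖₁γ`, and if `RE(T,V) > 0` then
`‖θ̂ - θ⁰‖₂² ≤ 4‖θ⁰‖₁γ/RE(T,V)²`. -/
theorem stmt5 (p : ℕ) (V : Matrix (Fin p) (Fin p) ℝ) (hPSD : V.PosSemidef)
    (θ0 θh : Fin p → ℝ) (γ : ℝ) (hγ : 0 < γ)
    (T : Finset (Fin p)) (hT : ∀ j, j ∈ T ↔ θ0 j ≠ 0)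
    (h : Fin p → ℝ) (hdef : h = θh - θ0)
    (hl1 : (∑ j, |θh j|) ≤ (∑ j, |θ0 j|))
    (hQ : h ⬝ᵥ V.mulVec h ≤ 2 * γ * (∑ j, |h j|)) :
    (∑ j ∈ Tᶜ, |h j|) ≤ (∑ j ∈ T, |h j|) ∧
    h ⬝ᵥ V.mulVec h ≤ 4 * (∑ j, |θ0 j|) * γ ∧
    ∀ RE : ℝ,
      RE = sInf {x : ℝ | ∃ g : Fin p → ℝ, g ≠ 0 ∧
          (∑ j ∈ Tᶜ, |g j|) ≤ (∑ j ∈ T, |g j|) ∧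
          x = Real.sqrt (g ⬝ᵥ V.mulVec g) / Real.sqrt (∑ j, (g j) ^ 2)} →
      0 < RE →
      (∑ j, (θh j - θ0 j) ^ 2) ≤ 4 * (∑ j, |θ0 j|) * γ / RE ^ 2 :=
  stmt5_general p V θ0 θh γ hγ T hT h hdef hl1 hQ
end

section
/- (Deterministic core of the l₁ error bound for the Dantzig selector.) Let V be a symmetric positive semidefinite p×p matrix, T ⊂ {1,…,p} with |T| = S ≥ 1, and h ∈ C_T = {h : ‖h_{T^c}‖₁ ≤ ‖h_T‖₁} with h ≠ 0. Suppose h^T V h ≤ 2γ‖h‖₁ for some γ > 0, and let κ = κ(T,V) = inf_{0≠g∈C_T} S^{1/2}(g^T V g)^{1/2}/‖g_T‖₁ > 0. Then ‖h‖₁ ≤ 8Sγ/κ². -/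
open Finset Matrix

/-! A vector `h` in the cone `C_T` carries at least half of its `ℓ₁` mass on `T`, so
`κ² ‖h‖₁² ≤ 4 κ² ‖h_T‖₁² ≤ 4 S · hᵀVh ≤ 8 S γ ‖h‖₁` by the definition of the compatibility
factor `κ`; dividing by `κ² ‖h‖₁ > 0` gives the bound. -/

lemma sum_abs_pos_of_ne_zero {ι : Type*} [Fintype ι] {g : ι → ℝ} (hg : g ≠ 0) :
    0 < ∑ j, |g j| := by
  obtain ⟨j, hj⟩ := Function.ne_iff.mp hg
  exact sum_pos' (fun i _ => abs_nonneg (g i)) ⟨j, mem_univ j, abs_pos.mpr hj⟩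

section Cone

variable {ι : Type*} [Fintype ι] [DecidableEq ι] {T : Finset ι} {g : ι → ℝ}

lemma sum_abs_le_two_mul_of_cone (hcone : ∑ j ∈ Tᶜ, |g j| ≤ ∑ j ∈ T, |g j|) :
    ∑ j, |g j| ≤ 2 * ∑ j ∈ T, |g j| := by
  rw [← sum_add_sum_compl T]
  linarith

lemma sum_abs_pos_of_cone (hg : g ≠ 0) (hcone : ∑ j ∈ Tᶜ, |g j| ≤ ∑ j ∈ T, |g j|) :
    0 < ∑ j ∈ T, |g j| := by
  linarith [sum_abs_pos_of_ne_zero hg, sum_abs_le_two_mul_of_cone hcone]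

end Cone

section Compatibility

variable {ι : Type*} [Fintype ι] [DecidableEq ι]

/-- `κ(T,V)`, with the sparsity `S` (the paper's `|T|`) as a free parameter. -/
noncomputable def compatibilityFactor (S : ℝ) (T : Finset ι) (V : Matrix ι ι ℝ) : ℝ :=
  sInf {x : ℝ | ∃ g : ι → ℝ, g ≠ 0 ∧ (∑ j ∈ Tᶜ, |g j|) ≤ (∑ j ∈ T, |g j|) ∧
    x = Real.sqrt S * Real.sqrt (g ⬝ᵥ V.mulVec g) / (∑ j ∈ T, |g j|)}

variable {S : ℝ} {T : Finset ι} {V : Matrix ι ι ℝ} {g : ι → ℝ}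

lemma compatibilityFactor_le (hg : g ≠ 0) (hcone : ∑ j ∈ Tᶜ, |g j| ≤ ∑ j ∈ T, |g j|) :
    compatibilityFactor S T V ≤
      Real.sqrt S * Real.sqrt (g ⬝ᵥ V.mulVec g) / (∑ j ∈ T, |g j|) := by
  refine csInf_le ⟨0, ?_⟩ ⟨g, hg, hcone, rfl⟩
  rintro x ⟨g', -, -, rfl⟩
  positivity

lemma sq_compatibilityFactor_mul_le (hS : 0 ≤ S) (hκ : 0 < compatibilityFactor S T V)
    (hg : g ≠ 0) (hcone : ∑ j ∈ Tᶜ, |g j| ≤ ∑ j ∈ T, |g j|) :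
    (compatibilityFactor S T V * ∑ j ∈ T, |g j|) ^ 2 ≤ S * (g ⬝ᵥ V.mulVec g) := by
  have hA := sum_abs_pos_of_cone hg hcone
  have hle : compatibilityFactor S T V * ∑ j ∈ T, |g j| ≤
      Real.sqrt (S * (g ⬝ᵥ V.mulVec g)) := by
    rw [Real.sqrt_mul hS, ← le_div_iff₀ hA]
    exact compatibilityFactor_le hg hcone
  exact (Real.le_sqrt' (mul_pos hκ hA)).mp hle

end Compatibility

theorem stmt6_general (p : ℕ) (V : Matrix (Fin p) (Fin p) ℝ)
    (T : Finset (Fin p)) (S : ℕ)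
    (h : Fin p → ℝ) (hne : h ≠ 0)
    (hcone : (∑ j ∈ Tᶜ, |h j|) ≤ (∑ j ∈ T, |h j|))
    (γ : ℝ)
    (hQ : h ⬝ᵥ V.mulVec h ≤ 2 * γ * (∑ j, |h j|))
    (κ : ℝ)
    (hκdef : κ = sInf {x : ℝ | ∃ g : Fin p → ℝ, g ≠ 0 ∧
        (∑ j ∈ Tᶜ, |g j|) ≤ (∑ j ∈ T, |g j|) ∧
        x = Real.sqrt S * Real.sqrt (g ⬝ᵥ V.mulVec g) / (∑ j ∈ T, |g j|)})
    (hκ : 0 < κ) :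
    (∑ j, |h j|) ≤ 8 * S * γ / κ ^ 2 := by
  replace hκdef : κ = compatibilityFactor S T V := hκdef
  have hκA : (κ * ∑ j ∈ T, |h j|) ^ 2 ≤ S * (h ⬝ᵥ V.mulVec h) :=
    hκdef ▸ sq_compatibilityFactor_mul_le (Nat.cast_nonneg S) (hκdef ▸ hκ) hne hcone
  have key : (∑ j, |h j|) * κ ^ 2 * ∑ j, |h j| ≤ 8 * S * γ * ∑ j, |h j| :=
    calc (∑ j, |h j|) * κ ^ 2 * ∑ j, |h j| = κ ^ 2 * (∑ j, |h j|) ^ 2 := by ring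
      _ ≤ κ ^ 2 * (2 * ∑ j ∈ T, |h j|) ^ 2 := by gcongr; exact sum_abs_le_two_mul_of_cone hcone
      _ = 4 * (κ * ∑ j ∈ T, |h j|) ^ 2 := by ring
      _ ≤ 4 * (S * (h ⬝ᵥ V.mulVec h)) := by gcongr
      _ ≤ 4 * (S * (2 * γ * ∑ j, |h j|)) := by gcongr
      _ = 8 * S * γ * ∑ j, |h j| := by ring
  rw [le_div_iff₀ (by positivity)]
  exact le_of_mul_le_mul_right key (sum_abs_pos_of_ne_zero hne)

/-- Deterministic core of the l₁ error bound for the Dantzig selector: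
if `0 ≠ h ∈ C_T` satisfies `hᵀVh ≤ 2γ‖h‖₁` and the compatibility factor
`κ = κ(T,V) > 0`, then `‖h‖₁ ≤ 8Sγ/κ²`. -/
theorem stmt6 (p : ℕ) (V : Matrix (Fin p) (Fin p) ℝ) (hPSD : V.PosSemidef)
    (T : Finset (Fin p)) (S : ℕ) (hcard : T.card = S) (hS : 1 ≤ S)
    (h : Fin p → ℝ) (hne : h ≠ 0)
    (hcone : (∑ j ∈ Tᶜ, |h j|) ≤ (∑ j ∈ T, |h j|))
    (γ : ℝ) (hγ : 0 < γ)
    (hQ : h ⬝ᵥ V.mulVec h ≤ 2 * γ * (∑ j, |h j|))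
    (κ : ℝ)
    (hκdef : κ = sInf {x : ℝ | ∃ g : Fin p → ℝ, g ≠ 0 ∧
        (∑ j ∈ Tᶜ, |g j|) ≤ (∑ j ∈ T, |g j|) ∧
        x = Real.sqrt S * Real.sqrt (g ⬝ᵥ V.mulVec g) / (∑ j ∈ T, |g j|)})
    (hκ : 0 < κ) :
    (∑ j, |h j|) ≤ 8 * S * γ / κ ^ 2 :=
  stmt6_general p V T S h hne hcone γ hQ κ hκdef hκ
end

section
/- (Deterministic core of the l_q error bound.) Let V be symmetric PSD, T ⊂ {1,…,p} with |T| = S ≥ 1, q ∈ [1,∞), and F_q = F_q(T,V) = inf_{0≠g∈C_T} S^{1/q}(g^T V g)/(‖g_T‖₁‖g‖_q) > 0. If 0 ≠ h ∈ C_T satisfies h^T V h ≤ 2γ‖h‖₁ ≤ 4γ‖h_T‖₁ for some γ > 0, then ‖h‖_q ≤ 4·S^{1/q}·γ / F_q. -/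
open Finset Matrix

/-- `sInf` on `ℝ` is `0` on sets that are not bounded below. -/
theorem Real.bddBelow_of_sInf_pos {s : Set ℝ} (hs : 0 < sInf s) : BddBelow s := by
  by_contra hbdd
  rw [Real.sInf_of_not_bddBelow hbdd] at hs
  exact hs.false

theorem sum_abs_pos_of_sum_compl_abs_le {ι : Type*} [Fintype ι] [DecidableEq ι]
    {T : Finset ι} {h : ι → ℝ} (hne : h ≠ 0)
    (hcone : ∑ j ∈ Tᶜ, |h j| ≤ ∑ j ∈ T, |h j|) : 0 < ∑ j ∈ T, |h j| := by
  have hsum : 0 < ∑ j, |h j| := by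
    obtain ⟨j, hj⟩ := Function.ne_iff.mp hne
    exact Finset.sum_pos' (fun j _ => abs_nonneg (h j)) ⟨j, mem_univ j, abs_pos.mpr hj⟩
  rw [← Finset.sum_add_sum_compl T] at hsum
  linarith

theorem rpow_sum_abs_rpow_pos {ι : Type*} [Fintype ι] {h : ι → ℝ} (hne : h ≠ 0) (q r : ℝ) :
    0 < (∑ j, |h j| ^ q) ^ r := by
  obtain ⟨j, hj⟩ := Function.ne_iff.mp hne
  refine Real.rpow_pos_of_pos (Finset.sum_pos' (fun j _ => ?_) ⟨j, mem_univ j, ?_⟩) r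
  · exact Real.rpow_nonneg (abs_nonneg (h j)) q
  · exact Real.rpow_pos_of_pos (abs_pos.mpr hj) q

theorem stmt7_general (p : ℕ) (V : Matrix (Fin p) (Fin p) ℝ)
    (T : Finset (Fin p)) (S : ℕ)
    (q : ℝ)
    (h : Fin p → ℝ) (hne : h ≠ 0)
    (hcone : (∑ j ∈ Tᶜ, |h j|) ≤ (∑ j ∈ T, |h j|))
    (γ : ℝ)
    (hQ : h ⬝ᵥ V.mulVec h ≤ 2 * γ * (∑ j, |h j|))
    (hQ' : 2 * γ * (∑ j, |h j|) ≤ 4 * γ * (∑ j ∈ T, |h j|))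
    (Fq : ℝ)
    (hFdef : Fq = sInf {x : ℝ | ∃ g : Fin p → ℝ, g ≠ 0 ∧
        (∑ j ∈ Tᶜ, |g j|) ≤ (∑ j ∈ T, |g j|) ∧
        x = (S : ℝ) ^ (1 / q) * (g ⬝ᵥ V.mulVec g) /
          ((∑ j ∈ T, |g j|) * (∑ j, |g j| ^ q) ^ (1 / q))})
    (hF : 0 < Fq) :
    (∑ j, |h j| ^ q) ^ (1 / q) ≤ 4 * (S : ℝ) ^ (1 / q) * γ / Fq := by
  set hT_l1 := ∑ j ∈ T, |h j|
  set h_lq := (∑ j, |h j| ^ q) ^ (1 / q)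
  have hT_l1_pos : 0 < hT_l1 := sum_abs_pos_of_sum_compl_abs_le hne hcone
  have h_lq_pos : 0 < h_lq := rpow_sum_abs_rpow_pos hne q (1 / q)
  have hF_le : Fq ≤ (S : ℝ) ^ (1 / q) * (h ⬝ᵥ V.mulVec h) / (hT_l1 * h_lq) := by
    rw [hFdef] at hF ⊢
    exact csInf_le (Real.bddBelow_of_sInf_pos hF) ⟨h, hne, hcone, rfl⟩
  have hF_lq : Fq * h_lq * hT_l1 ≤ 4 * (S : ℝ) ^ (1 / q) * γ * hT_l1 :=
    calc Fq * h_lq * hT_l1 = Fq * (hT_l1 * h_lq) := by ring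
      _ ≤ (S : ℝ) ^ (1 / q) * (h ⬝ᵥ V.mulVec h) := (le_div_iff₀ (by positivity)).mp hF_le
      _ ≤ (S : ℝ) ^ (1 / q) * (4 * γ * hT_l1) := by gcongr; exact hQ.trans hQ'
      _ = 4 * (S : ℝ) ^ (1 / q) * γ * hT_l1 := by ring
  rw [le_div_iff₀ hF, mul_comm]
  exact le_of_mul_le_mul_right hF_lq hT_l1_pos

/-- Deterministic core of the l_q error bound: for `q ∈ [1,∞)`, if `0 ≠ h ∈ C_T`
satisfies `hᵀVh ≤ 2γ‖h‖₁ ≤ 4γ‖h_T‖₁` and the weak cone invertibility factor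
`F_q = F_q(T,V) > 0`, then `‖h‖_q ≤ 4·S^{1/q}·γ/F_q`. -/
theorem stmt7 (p : ℕ) (V : Matrix (Fin p) (Fin p) ℝ) (hPSD : V.PosSemidef)
    (T : Finset (Fin p)) (S : ℕ) (hcard : T.card = S) (hS : 1 ≤ S)
    (q : ℝ) (hq : 1 ≤ q)
    (h : Fin p → ℝ) (hne : h ≠ 0)
    (hcone : (∑ j ∈ Tᶜ, |h j|) ≤ (∑ j ∈ T, |h j|))
    (γ : ℝ) (hγ : 0 < γ)
    (hQ : h ⬝ᵥ V.mulVec h ≤ 2 * γ * (∑ j, |h j|))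
    (hQ' : 2 * γ * (∑ j, |h j|) ≤ 4 * γ * (∑ j ∈ T, |h j|))
    (Fq : ℝ)
    (hFdef : Fq = sInf {x : ℝ | ∃ g : Fin p → ℝ, g ≠ 0 ∧
        (∑ j ∈ Tᶜ, |g j|) ≤ (∑ j ∈ T, |g j|) ∧
        x = (S : ℝ) ^ (1 / q) * (g ⬝ᵥ V.mulVec g) /
          ((∑ j ∈ T, |g j|) * (∑ j, |g j| ^ q) ^ (1 / q))})
    (hF : 0 < Fq) :
    (∑ j, |h j| ^ q) ^ (1 / q) ≤ 4 * (S : ℝ) ^ (1 / q) * γ / Fq :=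
  stmt7_general p V T S q h hne hcone γ hQ hQ' Fq hFdef hF
end

section
/- Let X₁,…,X_N be real random variables with tail bounds P(|X_i| ≥ ε) ≤ 2·exp(-ε²/(2(εK + NR²))) for all ε > 0 and all i, where K, R > 0. Then there is a universal constant L₁ > 0 (depending only on the Orlicz function Φ₁(x) = eˣ - 1) such that ‖max_{1≤i≤N} |X_i|‖_{Φ₁} ≤ L₁·(K·log(1+N) + √(NR²·log(1+N))). -/
open MeasureTheory

/-- The Orlicz norm with respect to `Φ₁(x) = eˣ - 1`. -/
noncomputable def orliczNormExp {Ω : Type} [MeasurableSpace Ω] (P : Measure Ω)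
    (X : Ω → ℝ) : ℝ :=
  sInf {c : ℝ | 0 < c ∧ (∫ ω, (Real.exp (|X ω| / c) - 1) ∂P) ≤ 1}

/-!
With `c = 64 (K log(1+N) + √(N R² log(1+N)))` and `M = maxᵢ |Xᵢ|`, the Bernstein exponent
`ε²/(2(εK + NR²))` at `ε = c s` is at least `16 s log(1+N)`: it is governed by `ε/(4K)` or by
`ε²/(4NR²)` according to which term of the denominator dominates. A union bound then gives
`P(M > c s) ≤ 2N e^{-16 s log(1+N)} ≤ e^{-6s}` for `s ≥ 1/3`, so that `P(e^{M/c} - 1 > t) ≤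
(1+t)⁻⁶ ≤ t⁻²/4` for `t ≥ 1/2`. The layer-cake formula bounds `E[e^{M/c} - 1]` by
`1/2 + ∫_{1/2}^∞ t⁻²/4 dt = 1`, hence `‖M‖_{Φ₁} ≤ c`.
-/

open Real Set

section OrliczNorm

variable {Ω : Type} [MeasurableSpace Ω] {P : Measure Ω}

lemma orliczNormExp_le_of_integral_le {X : Ω → ℝ} {c : ℝ} (hc : 0 < c)
    (h : ∫ ω, (exp (|X ω| / c) - 1) ∂P ≤ 1) : orliczNormExp P X ≤ c :=
  csInf_le ⟨0, fun _ hx => hx.1.le⟩ ⟨hc, h⟩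

lemma orliczNormExp_zero : orliczNormExp P (fun _ => 0) = 0 := by
  refine le_antisymm (le_of_forall_gt_imp_ge_of_dense fun c hc => ?_)
    (Real.sInf_nonneg fun _ hx => hx.1.le)
  exact orliczNormExp_le_of_integral_le hc (by simp)

end OrliczNorm

lemma integral_le_of_meas_lt_le {Ω : Type*} [MeasurableSpace Ω] {μ : Measure Ω}
    [IsProbabilityMeasure μ] {f : Ω → ℝ} (hf : 0 ≤ f) {a : ℝ} (ha : 0 ≤ a) {g : ℝ → ℝ}
    (hg : IntegrableOn g (Ioi a)) (hg0 : ∀ t ∈ Ioi a, 0 ≤ g t)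
    (htail : ∀ t ∈ Ioi a, μ {ω | t < f ω} ≤ ENNReal.ofReal (g t)) :
    ∫ ω, f ω ∂μ ≤ a + ∫ t in Ioi a, g t := by
  have hg_int : 0 ≤ ∫ t in Ioi a, g t := setIntegral_nonneg measurableSet_Ioi hg0
  by_cases hfi : Integrable f μ
  swap
  · rw [integral_undef hfi]; positivity
  have hlow : ∫⁻ t in Ioc 0 a, μ {ω | t < f ω} ≤ ENNReal.ofReal a :=
    calc ∫⁻ t in Ioc 0 a, μ {ω | t < f ω} ≤ ∫⁻ _ in Ioc 0 a, 1 :=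
          setLIntegral_mono' measurableSet_Ioc fun _ _ => prob_le_one
      _ = ENNReal.ofReal a := by simp
  have hhigh : ∫⁻ t in Ioi a, μ {ω | t < f ω} ≤ ENNReal.ofReal (∫ t in Ioi a, g t) := by
    rw [ofReal_integral_eq_lintegral_ofReal hg ((ae_restrict_iff' measurableSet_Ioi).2
      (Filter.Eventually.of_forall hg0))]
    exact setLIntegral_mono' measurableSet_Ioi htail
  rw [integral_eq_lintegral_of_nonneg_ae (Filter.Eventually.of_forall hf)
    hfi.aestronglyMeasurable]
  refine ENNReal.toReal_le_of_le_ofReal (by positivity) ?_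
  rw [lintegral_eq_lintegral_meas_lt μ (Filter.Eventually.of_forall hf) hfi.aemeasurable,
    ← Ioc_union_Ioi_eq_Ioi ha, lintegral_union measurableSet_Ioi Ioc_disjoint_Ioi_same,
    ENNReal.ofReal_add ha hg_int]
  exact add_le_add hlow hhigh

lemma measure_lt_iSup_le_sum {Ω ι : Type*} [MeasurableSpace Ω] [Fintype ι] [Nonempty ι]
    (μ : Measure Ω) (Y : ι → Ω → ℝ) (ε : ℝ) :
    μ {ω | ε < ⨆ i, Y i ω} ≤ ∑ i, μ {ω | ε ≤ Y i ω} := by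
  refine (measure_mono fun ω hω => ?_).trans (measure_iUnion_fintype_le μ _)
  obtain ⟨i, hi⟩ := exists_lt_of_lt_ciSup (show ε < ⨆ i, Y i ω from hω)
  exact mem_iUnion.2 ⟨i, hi.le⟩

lemma min_le_bernstein_exponent {K V ε : ℝ} (hK : 0 < K) (hV : 0 < V) (hε : 0 < ε) :
    min (ε / (4 * K)) (ε ^ 2 / (4 * V)) ≤ ε ^ 2 / (2 * (ε * K + V)) := by
  rcases le_total (ε * K) V with h | h
  · exact min_le_of_right_le (div_le_div_of_nonneg_left (by positivity) (by positivity)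
      (by linarith))
  · refine min_le_of_left_le ?_
    rw [show ε / (4 * K) = ε ^ 2 / (4 * (ε * K)) by field_simp]
    exact div_le_div_of_nonneg_left (by positivity) (by positivity) (by linarith)

lemma sixteen_mul_le_bernstein_exponent {K V L s ε : ℝ} (hK : 0 < K) (hV : 0 < V) (hL : 0 < L)
    (hs : 1 / 64 ≤ s) (hε₁ : 64 * K * L * s ≤ ε) (hε₂ : 4096 * V * L * s ^ 2 ≤ ε ^ 2) :
    16 * L * s ≤ ε ^ 2 / (2 * (ε * K + V)) := by
  have hε : 0 < ε := lt_of_lt_of_le (by positivity) hε₁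
  refine le_trans (le_min ?_ ?_) (min_le_bernstein_exponent hK hV hε)
  · rw [le_div_iff₀ (by positivity)]; nlinarith
  · rw [le_div_iff₀ (by positivity)]
    nlinarith [mul_pos (mul_pos hV hL) (by linarith : (0 : ℝ) < s)]

lemma mul_two_mul_exp_neg_bernstein_exponent_le {N K V s ε : ℝ} (hN : 1 ≤ N) (hK : 0 < K)
    (hV : 0 < V) (hs : 1 / 3 ≤ s) (hε₁ : 64 * K * log (1 + N) * s ≤ ε)
    (hε₂ : 4096 * V * log (1 + N) * s ^ 2 ≤ ε ^ 2) :
    N * (2 * exp (-(ε ^ 2) / (2 * (ε * K + V)))) ≤ exp (-(6 * s)) := by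
  set L := log (1 + N)
  have hL : 0.6931471803 < L :=
    log_two_gt_d9.trans_le (log_le_log (by norm_num) (by linarith))
  have hlog2N : log (2 * N) ≤ 2 * L := by
    rw [← log_rpow (by positivity)]
    exact log_le_log (by positivity) (by norm_num; nlinarith)
  have hB := sixteen_mul_le_bernstein_exponent hK hV (by linarith) (by linarith) hε₁ hε₂
  calc N * (2 * exp (-(ε ^ 2) / (2 * (ε * K + V))))
      = exp (log (2 * N) - ε ^ 2 / (2 * (ε * K + V))) := by
        rw [exp_sub, exp_log (by positivity), neg_div, exp_neg]; ring
    _ ≤ exp (-(6 * s)) := exp_le_exp.2 (by nlinarith)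

lemma exp_neg_six_mul_log_one_add_le {t : ℝ} (ht : 1 / 2 ≤ t) :
    exp (-(6 * log (1 + t))) ≤ t ^ (-2 : ℝ) / 4 := by
  have ht0 : 0 < t := by linarith
  have hexp : exp (6 * log (1 + t)) = (1 + t) ^ 6 := by
    rw [show (6 : ℝ) = (6 : ℕ) by norm_num, ← log_pow, exp_log (by positivity)]
  have hpow : 4 * t ^ 2 ≤ (1 + t) ^ 6 := by
    have h4 : 4 ≤ (1 + t) ^ 4 := le_trans (by norm_num) (pow_le_pow_left₀ (by norm_num)
      (by linarith : (3 / 2 : ℝ) ≤ 1 + t) 4)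
    have h2 : t ^ 2 ≤ (1 + t) ^ 2 := pow_le_pow_left₀ ht0.le (by linarith) 2
    nlinarith [pow_pos ht0 2]
  calc exp (-(6 * log (1 + t))) = ((1 + t) ^ 6)⁻¹ := by rw [exp_neg, hexp]
    _ ≤ (4 * t ^ 2)⁻¹ := inv_anti₀ (by positivity) hpow
    _ = t ^ (-2 : ℝ) / 4 := by rw [rpow_neg ht0.le, rpow_two]; ring

lemma integral_Ioi_half_rpow_neg_two_div_four :
    ∫ t in Ioi (1 / 2 : ℝ), t ^ (-2 : ℝ) / 4 = 1 / 2 := by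
  rw [integral_div, integral_Ioi_rpow_of_lt (by norm_num) (by norm_num)]
  norm_num

noncomputable def bernsteinScale (K V N : ℝ) : ℝ :=
  64 * (K * log (1 + N) + √(V * log (1 + N)))

lemma bernsteinScale_pos {K V N : ℝ} (hK : 0 < K) (hV : 0 < V) (hN : 0 < N) :
    0 < bernsteinScale K V N := by
  have : 0 < log (1 + N) := log_pos (by linarith)
  unfold bernsteinScale; positivity

lemma bernsteinScale_mul_bounds {K V N s : ℝ} (hK : 0 ≤ K) (hV : 0 < V) (hN : 0 < N)
    (hs : 0 ≤ s) :
    64 * K * log (1 + N) * s ≤ bernsteinScale K V N * s ∧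
      4096 * V * log (1 + N) * s ^ 2 ≤ (bernsteinScale K V N * s) ^ 2 := by
  have hL : 0 < log (1 + N) := log_pos (by linarith)
  have hsqrt : √(V * log (1 + N)) ^ 2 = V * log (1 + N) := sq_sqrt (by positivity)
  have := sqrt_nonneg (V * log (1 + N))
  unfold bernsteinScale
  constructor
  · nlinarith
  · calc 4096 * V * log (1 + N) * s ^ 2 = (64 * √(V * log (1 + N)) * s) ^ 2 := by
          rw [mul_pow, mul_pow, hsqrt]; ring
      _ ≤ _ := pow_le_pow_left₀ (by positivity) (by nlinarith [mul_nonneg hK hL.le]) 2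

section Tail

variable {Ω : Type*} [MeasurableSpace Ω] {P : Measure Ω} {N : ℕ} {X : Fin N → Ω → ℝ} {K V : ℝ}

lemma measure_bernsteinScale_mul_lt_iSup_le (hN : 0 < N) (hK : 0 < K) (hV : 0 < V)
    (htail : ∀ i, ∀ ε : ℝ, 0 < ε →
      P {ω | ε ≤ |X i ω|} ≤ ENNReal.ofReal (2 * exp (-(ε ^ 2) / (2 * (ε * K + V)))))
    {s : ℝ} (hs : 1 / 3 ≤ s) :
    P {ω | bernsteinScale K V N * s < ⨆ i, |X i ω|} ≤ ENNReal.ofReal (exp (-(6 * s))) := by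
  have hN' : (1 : ℝ) ≤ N := by exact_mod_cast hN
  have : Nonempty (Fin N) := ⟨⟨0, hN⟩⟩
  set ε := bernsteinScale K V N * s
  have hε : 0 < ε := mul_pos (bernsteinScale_pos hK hV (by linarith)) (by linarith)
  obtain ⟨hε₁, hε₂⟩ :=
    bernsteinScale_mul_bounds hK.le hV (by linarith : (0 : ℝ) < N) (by linarith : (0 : ℝ) ≤ s)
  calc P {ω | ε < ⨆ i, |X i ω|} ≤ ∑ i, P {ω | ε ≤ |X i ω|} := measure_lt_iSup_le_sum _ _ _
    _ ≤ ∑ _i : Fin N, ENNReal.ofReal (2 * exp (-(ε ^ 2) / (2 * (ε * K + V)))) :=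
        Finset.sum_le_sum fun i _ => htail i ε hε
    _ = ENNReal.ofReal (N * (2 * exp (-(ε ^ 2) / (2 * (ε * K + V))))) := by
        rw [ENNReal.ofReal_mul (by positivity)]; simp
    _ ≤ ENNReal.ofReal (exp (-(6 * s))) :=
        ENNReal.ofReal_le_ofReal
          (mul_two_mul_exp_neg_bernstein_exponent_le hN' hK hV hs hε₁ hε₂)

lemma measure_lt_exp_iSup_div_bernsteinScale_sub_one_le (hN : 0 < N) (hK : 0 < K) (hV : 0 < V)
    (htail : ∀ i, ∀ ε : ℝ, 0 < ε →
      P {ω | ε ≤ |X i ω|} ≤ ENNReal.ofReal (2 * exp (-(ε ^ 2) / (2 * (ε * K + V)))))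
    {t : ℝ} (ht : 1 / 2 < t) :
    P {ω | t < exp ((⨆ i, |X i ω|) / bernsteinScale K V N) - 1} ≤
      ENNReal.ofReal (t ^ (-2 : ℝ) / 4) := by
  have hc := bernsteinScale_pos hK hV (by exact_mod_cast hN : (0 : ℝ) < N)
  have hs : 1 / 3 ≤ log (1 + t) := by
    have hinv : (1 + t)⁻¹ ≤ (3 / 2)⁻¹ := inv_anti₀ (by norm_num) (by linarith)
    linarith [one_sub_inv_le_log_of_pos (by linarith : 0 < 1 + t)]
  have hsub : {ω | t < exp ((⨆ i, |X i ω|) / bernsteinScale K V N) - 1} ⊆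
      {ω | bernsteinScale K V N * log (1 + t) < ⨆ i, |X i ω|} := fun ω hω => by
    have := (log_lt_iff_lt_exp (by linarith)).2 (lt_sub_iff_add_lt'.1 hω)
    rwa [lt_div_iff₀' hc] at this
  exact (measure_mono hsub).trans <|
    (measure_bernsteinScale_mul_lt_iSup_le hN hK hV htail hs).trans
      (ENNReal.ofReal_le_ofReal (exp_neg_six_mul_log_one_add_le ht.le))

end Tail

/-- Maximal inequality for the Orlicz norm `Φ₁(x) = eˣ - 1` (van der Vaart–Wellner,
Lemma 2.2.10): there is a universal constant `L₁ > 0` such that for random variables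
`X₁,…,X_N` with Bernstein-type tails `P(|X_i| ≥ ε) ≤ 2·exp(-ε²/(2(εK + NR²)))`,
`‖max_i |X_i|‖_{Φ₁} ≤ L₁·(K·log(1+N) + √(NR²·log(1+N)))`. -/
theorem stmt10 :
    ∃ L₁ : ℝ, 0 < L₁ ∧
      ∀ (Ω : Type) (_ : MeasurableSpace Ω) (P : Measure Ω), IsProbabilityMeasure P →
      ∀ (N : ℕ) (X : Fin N → Ω → ℝ) (K R : ℝ), 0 < K → 0 < R →
      (∀ i : Fin N, ∀ ε : ℝ, 0 < ε →
        P {ω | ε ≤ |X i ω|} ≤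
          ENNReal.ofReal (2 * Real.exp (-(ε ^ 2) / (2 * (ε * K + N * R ^ 2))))) →
      orliczNormExp P (fun ω => ⨆ i : Fin N, |X i ω|) ≤
        L₁ * (K * Real.log (1 + N) + Real.sqrt (N * R ^ 2 * Real.log (1 + N))) := by
  refine ⟨64, by norm_num, fun Ω _ P _ N X K R hK hR htail => ?_⟩
  rcases N.eq_zero_or_pos with rfl | hN
  · simp [Real.iSup_of_isEmpty, orliczNormExp_zero]
  have hV : (0 : ℝ) < N * R ^ 2 := by positivity
  have hM : ∀ ω, 0 ≤ ⨆ i, |X i ω| := fun ω => Real.iSup_nonneg fun i => abs_nonneg _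
  have hc := bernsteinScale_pos hK hV (by exact_mod_cast hN : (0 : ℝ) < N)
  refine orliczNormExp_le_of_integral_le hc ?_
  simp only [abs_of_nonneg (hM _)]
  calc ∫ ω, (exp ((⨆ i, |X i ω|) / bernsteinScale K (N * R ^ 2) N) - 1) ∂P
      ≤ 1 / 2 + ∫ t in Ioi (1 / 2 : ℝ), t ^ (-2 : ℝ) / 4 :=
        integral_le_of_meas_lt_le (fun ω => sub_nonneg.2 (one_le_exp (div_nonneg (hM ω) hc.le)))
          (by norm_num) ((integrableOn_Ioi_rpow_of_lt (by norm_num) (by norm_num)).div_const _)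
          (fun t ht => div_nonneg (rpow_nonneg ((by norm_num : (0 : ℝ) ≤ 1 / 2).trans ht.le) _)
            (by norm_num))
          fun t ht => measure_lt_exp_iSup_div_bernsteinScale_sub_one_le hN hK hV htail ht
    _ = 1 := by rw [integral_Ioi_half_rpow_neg_two_div_four]; norm_num
end
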